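/- arXiv:2511.14623 — 4 statements merged into one kernel-verified Lean document; each statement's English description precedes it below -/
import Mathlib

section
/- Let X, Y, Z be real normed vector spaces, let J : X × Y → ℝ and R : X × Y → Z be Fréchet differentiable, and let u : X → Y be Fréchet differentiable with R(σ, u(σ)) = 0 for all σ ∈ X. Fix σ ∈ X and let w : Z → ℝ be a continuous linear functional satisfying the adjoint equation w ∘ ∂₂R(σ, u(σ)) = −∂₂J(σ, u(σ)) as continuous linear maps from Y to ℝ. Then the Fréchet derivative at σ of the reduced objective σ' ↦ J(σ', u(σ')) equals ∂₁J(σ, u(σ)) + w ∘ ∂₁R(σ, u(σ)). -/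
/-!
Differentiating the state equation `R (σ', u σ') = 0` along the graph of `u` gives
`∂₂R ∘ u' = -∂₁R`. Hence in the chain rule `∂₁J + ∂₂J ∘ u'` for the reduced objective, the
adjoint equation `∂₂J = -(w ∘ ∂₂R)` turns the term `∂₂J ∘ u'`, which involves the unknown
state sensitivity `u'`, into `w ∘ ∂₁R`.
-/

section

open ContinuousLinearMap

variable {𝕜 E F G : Type*} [NontriviallyNormedField 𝕜]
  [NormedAddCommGroup E] [NormedSpace 𝕜 E] [NormedAddCommGroup F] [NormedSpace 𝕜 F]
  [NormedAddCommGroup G] [NormedSpace 𝕜 G]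

theorem fderiv_comp_prodMk_left {f : E × F → G} {x : E} {y : F}
    (hf : DifferentiableAt 𝕜 f (x, y)) :
    fderiv 𝕜 (fun x' => f (x', y)) x = (fderiv 𝕜 f (x, y)).comp (inl 𝕜 E F) :=
  (hf.hasFDerivAt.comp x (hasFDerivAt_prodMk_left x y)).fderiv

theorem fderiv_comp_prodMk_right {f : E × F → G} {x : E} {y : F}
    (hf : DifferentiableAt 𝕜 f (x, y)) :
    fderiv 𝕜 (fun y' => f (x, y')) y = (fderiv 𝕜 f (x, y)).comp (inr 𝕜 E F) :=
  (hf.hasFDerivAt.comp y (hasFDerivAt_prodMk_right x y)).fderiv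

theorem fderiv_comp_graph {f : E × F → G} {g : E → F} {x : E}
    (hf : DifferentiableAt 𝕜 f (x, g x)) (hg : DifferentiableAt 𝕜 g x) :
    fderiv 𝕜 (fun x' => f (x', g x')) x
      = fderiv 𝕜 (fun x' => f (x', g x)) x
        + (fderiv 𝕜 (fun y => f (x, y)) (g x)).comp (fderiv 𝕜 g x) := by
  have hchain : fderiv 𝕜 (fun x' => f (x', g x')) x
      = (fderiv 𝕜 f (x, g x)).comp ((ContinuousLinearMap.id 𝕜 E).prod (fderiv 𝕜 g x)) :=
    (hf.hasFDerivAt.comp x ((hasFDerivAt_id x).prodMk hg.hasFDerivAt)).fderiv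
  rw [hchain, fderiv_comp_prodMk_left hf, fderiv_comp_prodMk_right hf]
  ext v
  simp only [comp_apply, prod_apply, id_apply, add_apply, inl_apply, inr_apply, ← map_add,
    Prod.mk_add_mk, add_zero, zero_add]

end

/-- Adjoint-method sensitivity formula: if `R (σ, u σ) = 0` for all `σ` and the
continuous linear functional `w` solves the adjoint equation
`w ∘ ∂₂R(σ, u σ) = −∂₂J(σ, u σ)`, then the Fréchet derivative of the reduced
objective `σ' ↦ J (σ', u σ')` at `σ` equals `∂₁J(σ, u σ) + w ∘ ∂₁R(σ, u σ)`. -/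
theorem stmt_2 {X Y Z : Type*} [NormedAddCommGroup X] [NormedSpace ℝ X]
    [NormedAddCommGroup Y] [NormedSpace ℝ Y]
    [NormedAddCommGroup Z] [NormedSpace ℝ Z]
    (J : X × Y → ℝ) (R : X × Y → Z) (u : X → Y)
    (hJ : Differentiable ℝ J) (hR : Differentiable ℝ R)
    (hu : Differentiable ℝ u)
    (hstate : ∀ σ : X, R (σ, u σ) = 0)
    (σ : X) (w : Z →L[ℝ] ℝ)
    (hadj : w.comp (fderiv ℝ (fun y => R (σ, y)) (u σ))
      = -(fderiv ℝ (fun y => J (σ, y)) (u σ))) :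
    fderiv ℝ (fun σ' => J (σ', u σ')) σ
      = fderiv ℝ (fun σ' => J (σ', u σ)) σ
        + w.comp (fderiv ℝ (fun σ' => R (σ', u σ)) σ) := by
  have hsensitivity : (fderiv ℝ (fun y => R (σ, y)) (u σ)).comp (fderiv ℝ u σ)
      = -fderiv ℝ (fun σ' => R (σ', u σ)) σ := by
    have hconstraint := fderiv_comp_graph (hR (σ, u σ)) (hu σ)
    rw [funext hstate, fderiv_const_apply] at hconstraint
    exact (neg_eq_of_add_eq_zero_right hconstraint.symm).symm
  rw [fderiv_comp_graph (hJ (σ, u σ)) (hu σ), ← neg_neg (fderiv ℝ (fun y => J (σ, y)) (u σ)),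
    ← hadj, ContinuousLinearMap.neg_comp, ContinuousLinearMap.comp_assoc, hsensitivity,
    ContinuousLinearMap.comp_neg, neg_neg]
end

section
/- Let X be a real normed vector space, H a real Hilbert space, f ∈ H, a : X → (H →L[ℝ] H) a Fréchet differentiable family of continuous linear operators such that each a(σ) is self-adjoint, and u : X → H Fréchet differentiable with a(σ)(u(σ)) = f for all σ ∈ X. Then the compliance map σ ↦ ⟪f, u(σ)⟫ is Fréchet differentiable, and its derivative at σ in direction h ∈ X equals −⟪(Da(σ) h)(u(σ)), u(σ)⟫, where Da(σ) is the Fréchet derivative of a at σ. -/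
/-!
Differentiating the state equation `a σ (u σ) = f` gives `a σ (u' h) = -(a' h) (u σ)`.
Since `f = a σ (u σ)` and `a σ` is self-adjoint, `⟪f, u' h⟫ = ⟪u σ, a σ (u' h)⟫`, so the
derivative of the state never has to be computed: it is replaced by `-(a' h) (u σ)`.
-/

open scoped RealInnerProductSpace

open Filter Topology

theorem clm_apply_fderiv_eq_neg_of_eventually_clm_apply_eq {𝕜 X E F : Type*}
    [NontriviallyNormedField 𝕜] [NormedAddCommGroup X] [NormedSpace 𝕜 X]
    [NormedAddCommGroup E] [NormedSpace 𝕜 E] [NormedAddCommGroup F] [NormedSpace 𝕜 F]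
    {a : X → E →L[𝕜] F} {u : X → E} {f : F} {σ : X}
    (ha : DifferentiableAt 𝕜 a σ) (hu : DifferentiableAt 𝕜 u σ)
    (hstate : ∀ᶠ σ' in 𝓝 σ, a σ' (u σ') = f) (h : X) :
    a σ (fderiv 𝕜 u σ h) = -(fderiv 𝕜 a σ h (u σ)) := by
  have hprod := ha.hasFDerivAt.clm_apply hu.hasFDerivAt
  have hconst : HasFDerivAt (fun σ' => a σ' (u σ')) (0 : X →L[𝕜] F) σ :=
    (hasFDerivAt_const f σ).congr_of_eventuallyEq hstate
  have hsum := congrArg (fun L : X →L[𝕜] F => L h) (hprod.unique hconst)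
  simp only [add_apply, ContinuousLinearMap.comp_apply, ContinuousLinearMap.flip_apply,
    zero_apply] at hsum
  exact eq_neg_of_add_eq_zero_left hsum

theorem fderiv_inner_apply_eq_neg_of_clm_apply_eq {X H : Type*}
    [NormedAddCommGroup X] [NormedSpace ℝ X] [NormedAddCommGroup H] [InnerProductSpace ℝ H]
    {a : X → H →L[ℝ] H} {u : X → H} {f : H} {σ : X}
    (ha : DifferentiableAt ℝ a σ) (hu : DifferentiableAt ℝ u σ)
    (hsa : ∀ v w : H, ⟪a σ v, w⟫ = ⟪v, a σ w⟫)
    (hstate : ∀ᶠ σ' in 𝓝 σ, a σ' (u σ') = f) (h : X) :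
    fderiv ℝ (fun σ' => ⟪f, u σ'⟫) σ h = -⟪(fderiv ℝ a σ h) (u σ), u σ⟫ := by
  have hderiv : fderiv ℝ (fun σ' => ⟪f, u σ'⟫) σ h = ⟪f, fderiv ℝ u σ h⟫ := by
    simp [fderiv_inner_apply ℝ (differentiableAt_const f) hu]
  rw [hderiv, ← hstate.self_of_nhds, hsa,
    clm_apply_fderiv_eq_neg_of_eventually_clm_apply_eq ha hu hstate, inner_neg_right,
    real_inner_comm]

theorem stmt_4_general {X H : Type*} [NormedAddCommGroup X] [NormedSpace ℝ X]
    [NormedAddCommGroup H] [InnerProductSpace ℝ H]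
    (f : H) (a : X → (H →L[ℝ] H)) (u : X → H)
    (ha : Differentiable ℝ a)
    (hsa : ∀ (σ : X) (v w : H), ⟪a σ v, w⟫ = ⟪v, a σ w⟫)
    (hu : Differentiable ℝ u)
    (hstate : ∀ σ : X, a σ (u σ) = f) :
    Differentiable ℝ (fun σ => ⟪f, u σ⟫) ∧
      ∀ (σ : X) (h : X),
        fderiv ℝ (fun σ' => ⟪f, u σ'⟫) σ h
          = -⟪(fderiv ℝ a σ h) (u σ), u σ⟫ :=
  ⟨(differentiable_const f).inner ℝ hu, fun σ h =>
    fderiv_inner_apply_eq_neg_of_clm_apply_eq (ha σ) (hu σ) (hsa σ)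
      (Eventually.of_forall hstate) h⟩

/-- Adjoint-method sensitivity for compliance: with self-adjoint state
operators `a σ` and state equation `a σ (u σ) = f`, the compliance map
`σ ↦ ⟪f, u σ⟫` is Fréchet differentiable and its derivative at `σ` in
direction `h` equals `−⟪(Da(σ) h)(u σ), u σ⟫`. -/
theorem stmt_4 {X H : Type*} [NormedAddCommGroup X] [NormedSpace ℝ X]
    [NormedAddCommGroup H] [InnerProductSpace ℝ H] [CompleteSpace H]
    (f : H) (a : X → (H →L[ℝ] H)) (u : X → H)
    (ha : Differentiable ℝ a)
    (hsa : ∀ (σ : X) (v w : H), ⟪a σ v, w⟫ = ⟪v, a σ w⟫)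
    (hu : Differentiable ℝ u)
    (hstate : ∀ σ : X, a σ (u σ) = f) :
    Differentiable ℝ (fun σ => ⟪f, u σ⟫) ∧
      ∀ (σ : X) (h : X),
        fderiv ℝ (fun σ' => ⟪f, u σ'⟫) σ h
          = -⟪(fderiv ℝ a σ h) (u σ), u σ⟫ :=
  stmt_4_general f a u ha hsa hu hstate
end

section
/- Let X be a real normed vector space, H a real Hilbert space, f ∈ H, a : X → (H →L[ℝ] H) a Fréchet differentiable family of continuous linear operators such that each a(σ) is self-adjoint, and u : X → H Fréchet differentiable with a(σ)(u(σ)) = f for all σ ∈ X. Then the strain-energy map σ ↦ ⟪a(σ)(u(σ)), u(σ)⟫ is Fréchet differentiable, and its derivative at σ in direction h equals −⟪(Da(σ) h)(u(σ)), u(σ)⟫; that is, the total derivative is the exact negative of the explicit partial derivative h ↦ ⟪(Da(σ) h)(u(σ)), u(σ)⟫ obtained by differentiating only the operator occurrence while holding the state u(σ) fixed. -/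
open scoped RealInnerProductSpace

/-!
Along the state constraint `a σ (u σ) = f` the energy equals `⟪f, u σ⟫`, and differentiating
the constraint gives `a σ (u' h) = -(a' h) (u σ)`. Self-adjointness moves `a σ` onto `u σ`:
`⟪f, u' h⟫ = ⟪u σ, a σ (u' h)⟫ = -⟪u σ, (a' h) (u σ)⟫`.
-/

section StateEquation

variable {𝕜 X E F : Type*} [NontriviallyNormedField 𝕜]
  [NormedAddCommGroup X] [NormedSpace 𝕜 X] [NormedAddCommGroup E] [NormedSpace 𝕜 E]
  [NormedAddCommGroup F] [NormedSpace 𝕜 F]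

theorem apply_deriv_eq_neg_of_clm_apply_eq_const {a : X → E →L[𝕜] F} {u : X → E} {f : F}
    {a' : X →L[𝕜] E →L[𝕜] F} {u' : X →L[𝕜] E} {σ : X}
    (ha : HasFDerivAt a a' σ) (hu : HasFDerivAt u u' σ) (hstate : ∀ σ', a σ' (u σ') = f)
    (h : X) : a σ (u' h) = -(a' h) (u σ) := by
  have hconst : HasFDerivAt (fun σ' => a σ' (u σ')) (0 : X →L[𝕜] F) σ := by
    simpa only [hstate] using hasFDerivAt_const f σ
  have hzero : (a σ).comp u' + a'.flip (u σ) = 0 := (ha.clm_apply hu).unique hconst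
  exact eq_neg_of_add_eq_zero_left (by simpa using congrArg (· h) hzero)

end StateEquation

theorem hasFDerivAt_inner_clm_apply_self_of_state {X H : Type*} [NormedAddCommGroup X]
    [NormedSpace ℝ X] [NormedAddCommGroup H] [InnerProductSpace ℝ H]
    {a : X → H →L[ℝ] H} {u : X → H} {f : H}
    {a' : X →L[ℝ] H →L[ℝ] H} {u' : X →L[ℝ] H} {σ : X}
    (ha : HasFDerivAt a a' σ) (hu : HasFDerivAt u u' σ)
    (hstate : ∀ σ', a σ' (u σ') = f) (hsymm : (a σ : H →ₗ[ℝ] H).IsSymmetric) :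
    HasFDerivAt (fun σ' => ⟪a σ' (u σ'), u σ'⟫)
      (-(innerSL ℝ (u σ)).comp (a'.flip (u σ))) σ := by
  have henergy :
      HasFDerivAt (fun σ' => ⟪a σ' (u σ'), u σ'⟫) ((innerSL ℝ f).comp u') σ := by
    have hpair : HasFDerivAt (fun σ' => ⟪f, u σ'⟫) ((innerSL ℝ f).comp u') σ :=
      (innerSL ℝ f).hasFDerivAt.comp σ hu
    simpa only [hstate] using hpair
  convert henergy using 1
  ext h
  calc -⟪u σ, (a' h) (u σ)⟫
      = ⟪u σ, a σ (u' h)⟫ := by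
        rw [apply_deriv_eq_neg_of_clm_apply_eq_const ha hu hstate, inner_neg_right]
    _ = ⟪a σ (u σ), u' h⟫ := (hsymm _ _).symm
    _ = ⟪f, u' h⟫ := by rw [hstate]

theorem stmt_5_general {X H : Type*} [NormedAddCommGroup X] [NormedSpace ℝ X]
    [NormedAddCommGroup H] [InnerProductSpace ℝ H]
    (f : H) (a : X → (H →L[ℝ] H)) (u : X → H)
    (ha : Differentiable ℝ a)
    (hsa : ∀ (σ : X) (v w : H), ⟪a σ v, w⟫ = ⟪v, a σ w⟫)
    (hu : Differentiable ℝ u)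
    (hstate : ∀ σ : X, a σ (u σ) = f) :
    Differentiable ℝ (fun σ => ⟪a σ (u σ), u σ⟫) ∧
      ∀ (σ : X) (h : X),
        fderiv ℝ (fun σ' => ⟪a σ' (u σ'), u σ'⟫) σ h
          = -⟪(fderiv ℝ a σ h) (u σ), u σ⟫ := by
  have hderiv (σ : X) := hasFDerivAt_inner_clm_apply_self_of_state (ha σ).hasFDerivAt
    (hu σ).hasFDerivAt hstate (hsa σ)
  refine ⟨fun σ => (hderiv σ).differentiableAt, fun σ h => ?_⟩
  rw [(hderiv σ).fderiv]
  simp [real_inner_comm]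

/-- Sign-reversal identity for compliance minimization: the total derivative of
the strain-energy map `σ ↦ ⟪a σ (u σ), u σ⟫` is the exact negative of the
explicit partial derivative `h ↦ ⟪(Da(σ) h)(u σ), u σ⟫`. -/
theorem stmt_5 {X H : Type*} [NormedAddCommGroup X] [NormedSpace ℝ X]
    [NormedAddCommGroup H] [InnerProductSpace ℝ H] [CompleteSpace H]
    (f : H) (a : X → (H →L[ℝ] H)) (u : X → H)
    (ha : Differentiable ℝ a)
    (hsa : ∀ (σ : X) (v w : H), ⟪a σ v, w⟫ = ⟪v, a σ w⟫)
    (hu : Differentiable ℝ u)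
    (hstate : ∀ σ : X, a σ (u σ) = f) :
    Differentiable ℝ (fun σ => ⟪a σ (u σ), u σ⟫) ∧
      ∀ (σ : X) (h : X),
        fderiv ℝ (fun σ' => ⟪a σ' (u σ'), u σ'⟫) σ h
          = -⟪(fderiv ℝ a σ h) (u σ), u σ⟫ :=
  stmt_5_general f a u ha hsa hu hstate
end

section
/- Let X be a real normed vector space, H a real Hilbert space, and a, m : X → (H →L[ℝ] H) Fréchet differentiable families of continuous linear operators such that each a(σ) and each m(σ) is self-adjoint. Let u : X → H be Fréchet differentiable and λ : X → ℝ be such that a(σ)(u(σ)) = λ(σ) · m(σ)(u(σ)) and ⟪m(σ)(u(σ)), u(σ)⟫ = 1 for all σ ∈ X. Then λ(σ) = ⟪a(σ)(u(σ)), u(σ)⟫ for all σ, λ is Fréchet differentiable, and its derivative at σ in direction h equals ⟪(Da(σ) h)(u(σ)), u(σ)⟫ − λ(σ) · ⟪(Dm(σ) h)(u(σ)), u(σ)⟫; in particular the derivative of λ contains no contribution from the derivative of the eigenmode u. -/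
open scoped RealInnerProductSpace

/-!
Differentiating `⟪A(σ) u(σ), u(σ)⟫` for self-adjoint `A(σ)` gives
`⟪A'(σ)h u, u⟫ + 2⟪A u, u'h⟫`. Applied to the mass constraint `⟪m u, u⟫ = 1` this yields
`2⟪m u, u'h⟫ = -⟪m'h u, u⟫`; applied to `λ = ⟪a u, u⟫`, the eigen-equation turns the term
`2⟪a u, u'h⟫` into `2λ⟪m u, u'h⟫`, so the derivative `u'` of the eigenmode drops out.
-/

section

variable {X H : Type*} [NormedAddCommGroup X] [NormedSpace ℝ X]
  [NormedAddCommGroup H] [InnerProductSpace ℝ H]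

theorem eq_inner_of_apply_eq_smul_of_inner_eq_one {A M : H →L[ℝ] H} {v : H} {c : ℝ}
    (heig : A v = c • M v) (hnorm : ⟪M v, v⟫ = 1) : c = ⟪A v, v⟫ := by
  rw [heig, real_inner_smul_left, hnorm, mul_one]

theorem fderiv_inner_clm_apply_self {A : X → H →L[ℝ] H} {u : X → H} {σ : X}
    (hA : DifferentiableAt ℝ A σ) (hu : DifferentiableAt ℝ u σ)
    (hsymm : (A σ : H →ₗ[ℝ] H).IsSymmetric) (h : X) :
    fderiv ℝ (fun τ => ⟪A τ (u τ), u τ⟫) σ h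
      = ⟪fderiv ℝ A σ h (u σ), u σ⟫ + 2 * ⟪A σ (u σ), fderiv ℝ u σ h⟫ := by
  rw [fderiv_inner_apply ℝ (hA.clm_apply hu) hu, fderiv_clm_apply hA hu]
  have hswap : ⟪A σ (fderiv ℝ u σ h), u σ⟫ = ⟪A σ (u σ), fderiv ℝ u σ h⟫ := by
    rw [real_inner_comm]; exact (hsymm _ _).symm
  simp only [add_apply, ContinuousLinearMap.comp_apply, ContinuousLinearMap.flip_apply,
    inner_add_left, hswap]
  ring

end

theorem stmt_8_general {X H : Type*} [NormedAddCommGroup X] [NormedSpace ℝ X]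
    [NormedAddCommGroup H] [InnerProductSpace ℝ H]
    (a m : X → (H →L[ℝ] H)) (u : X → H) (l : X → ℝ)
    (ha : Differentiable ℝ a) (hm : Differentiable ℝ m)
    (hsa : ∀ (σ : X) (v w : H), ⟪a σ v, w⟫ = ⟪v, a σ w⟫)
    (hsm : ∀ (σ : X) (v w : H), ⟪m σ v, w⟫ = ⟪v, m σ w⟫)
    (hu : Differentiable ℝ u)
    (heig : ∀ σ : X, a σ (u σ) = l σ • m σ (u σ))
    (hnorm : ∀ σ : X, ⟪m σ (u σ), u σ⟫ = 1) :
    (∀ σ : X, l σ = ⟪a σ (u σ), u σ⟫) ∧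
      Differentiable ℝ l ∧
      ∀ (σ : X) (h : X),
        fderiv ℝ l σ h
          = ⟪(fderiv ℝ a σ h) (u σ), u σ⟫
            - l σ * ⟪(fderiv ℝ m σ h) (u σ), u σ⟫ := by
  have hl : ∀ σ, l σ = ⟪a σ (u σ), u σ⟫ := fun σ =>
    eq_inner_of_apply_eq_smul_of_inner_eq_one (heig σ) (hnorm σ)
  have hl_fun : l = fun σ => ⟪a σ (u σ), u σ⟫ := funext hl
  refine ⟨hl, hl_fun ▸ fun σ => ((ha σ).clm_apply (hu σ)).inner ℝ (hu σ), fun σ h => ?_⟩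
  have hconstraint : ⟪fderiv ℝ m σ h (u σ), u σ⟫ + 2 * ⟪m σ (u σ), fderiv ℝ u σ h⟫ = 0 := by
    rw [← fderiv_inner_clm_apply_self (hm σ) (hu σ) (hsm σ) h, funext hnorm, fderiv_fun_const]
    rfl
  have heig_inner : ⟪a σ (u σ), fderiv ℝ u σ h⟫ = l σ * ⟪m σ (u σ), fderiv ℝ u σ h⟫ := by
    rw [heig σ, real_inner_smul_left]
  conv_lhs => rw [hl_fun]
  rw [fderiv_inner_clm_apply_self (ha σ) (hu σ) (hsa σ), heig_inner]
  linear_combination l σ * hconstraint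

/-- Sensitivity of a mass-normalized generalized eigenvalue: if
`a σ (u σ) = l σ • m σ (u σ)` and `⟪m σ (u σ), u σ⟫ = 1` for all `σ`, then
`l σ = ⟪a σ (u σ), u σ⟫`, `l` is Fréchet differentiable, and its derivative in
direction `h` is `⟪(Da(σ) h)(u σ), u σ⟫ − l σ * ⟪(Dm(σ) h)(u σ), u σ⟫`,
containing no contribution from the derivative of the eigenmode `u`. -/
theorem stmt_8 {X H : Type*} [NormedAddCommGroup X] [NormedSpace ℝ X]
    [NormedAddCommGroup H] [InnerProductSpace ℝ H] [CompleteSpace H]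
    (a m : X → (H →L[ℝ] H)) (u : X → H) (l : X → ℝ)
    (ha : Differentiable ℝ a) (hm : Differentiable ℝ m)
    (hsa : ∀ (σ : X) (v w : H), ⟪a σ v, w⟫ = ⟪v, a σ w⟫)
    (hsm : ∀ (σ : X) (v w : H), ⟪m σ v, w⟫ = ⟪v, m σ w⟫)
    (hu : Differentiable ℝ u)
    (heig : ∀ σ : X, a σ (u σ) = l σ • m σ (u σ))
    (hnorm : ∀ σ : X, ⟪m σ (u σ), u σ⟫ = 1) :
    (∀ σ : X, l σ = ⟪a σ (u σ), u σ⟫) ∧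
      Differentiable ℝ l ∧
      ∀ (σ : X) (h : X),
        fderiv ℝ l σ h
          = ⟪(fderiv ℝ a σ h) (u σ), u σ⟫
            - l σ * ⟪(fderiv ℝ m σ h) (u σ), u σ⟫ :=
  stmt_8_general a m u l ha hm hsa hsm hu heig hnorm
end
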